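/- arXiv:1808.08810 — 2 statements merged into one kernel-verified Lean document; each statement's English description precedes it below -/
import Mathlib

section
/- Let f : G → H be a bounded continuous frame with ‖f_g‖ ≤ C and frame bounds A, B. Let ψ ∈ L¹(G) ∩ L^∞(G) with 0 ≤ ψ ≤ 1 and ‖ψ‖₁ < ∞, let F ∈ L²(G), and let g¹,…,g^K be i.i.d. samples from the density ψ/‖ψ‖₁. Define the Monte Carlo synthesis V_f^{*K} F = (‖ψ‖₁/K) Σ_{k=1}^K F(g^k) f_{g^k}. Then 𝔼(‖V_f^{*K} F − V_f*(ψF)‖²_H) ≤ (‖ψ‖₁/K) A⁻¹ B C² ‖F‖₂². -/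
open MeasureTheory ProbabilityTheory
open scoped InnerProductSpace ENNReal

/-!
Under the sampling law `ν = ψ μ / ‖ψ‖₁` the vector `φ(g) = F(g) f_g` has weak mean
`m = V_f^*(ψF) / ‖ψ‖₁`, so the error equals `(‖ψ‖₁ / K) ∑ₖ (φ(gᵏ) - m)`, a scaled sum of `K`
independent centred vectors. Independence kills the cross terms, leaving
`(‖ψ‖₁² / K) · 𝔼_ν ‖φ - m‖²`, and the variance is at most the second moment
`∫ ψ ‖F f‖² dμ / ‖ψ‖₁ ≤ C² ‖F‖₂² / ‖ψ‖₁` because `ψ ≤ 1`. Finally `A⁻¹ B ≥ 1`.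
-/

section WeakIntegral

variable {G : Type*} [MeasurableSpace G] (𝕜 : Type*) {H : Type*} [RCLike 𝕜] [NormedAddCommGroup H]
  [InnerProductSpace 𝕜 H]

def HasWeakIntegral (ν : Measure G) (φ : G → H) (m : H) : Prop :=
  ∀ v : H, ∫ y, ⟪v, φ y⟫_𝕜 ∂ν = ⟪v, m⟫_𝕜

variable {𝕜} {ν : Measure G} [IsProbabilityMeasure ν] {φ : G → H} {m : H}

lemma HasWeakIntegral.sub_const (h : HasWeakIntegral 𝕜 ν φ m) (hφ : Integrable φ ν) :
    HasWeakIntegral 𝕜 ν (fun y => φ y - m) 0 := by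
  intro v
  simp_rw [inner_sub_right]
  rw [integral_sub (hφ.const_inner v) (integrable_const _), h v, integral_const, probReal_univ,
    one_smul, sub_self, inner_zero_right]

lemma HasWeakIntegral.integral_norm_sub_sq (h : HasWeakIntegral 𝕜 ν φ m) (hφ : MemLp φ 2 ν) :
    ∫ y, ‖φ y - m‖ ^ 2 ∂ν = ∫ y, ‖φ y‖ ^ 2 ∂ν - ‖m‖ ^ 2 := by
  have hinner : Integrable (fun y => RCLike.re ⟪m, φ y⟫_𝕜) ν :=
    ((hφ.integrable one_le_two).const_inner m).re
  have hre : ∫ y, RCLike.re ⟪m, φ y⟫_𝕜 ∂ν = ‖m‖ ^ 2 := by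
    rw [integral_re ((hφ.integrable one_le_two).const_inner m), h m, inner_self_eq_norm_sq]
  have hsq : Integrable (fun y => ‖φ y‖ ^ 2) ν := hφ.integrable_norm_pow two_ne_zero
  simp_rw [norm_sub_sq (𝕜 := 𝕜), inner_re_symm (φ _)]
  rw [integral_add (f := fun y => ‖φ y‖ ^ 2 - 2 * RCLike.re ⟪m, φ y⟫_𝕜)
      (hsq.sub (hinner.const_mul 2)) (integrable_const _),
    integral_sub hsq (hinner.const_mul 2), integral_const_mul, hre, integral_const, probReal_univ,
    one_smul]
  ring

end WeakIntegral

section Independence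

variable {G 𝕜 H Ω : Type*} [MeasurableSpace G] [RCLike 𝕜] [NormedAddCommGroup H]
  [InnerProductSpace 𝕜 H] [MeasurableSpace Ω] {P : Measure Ω} {ν : Measure G} {ξ : G → H}

lemma MeasureTheory.MemLp.integrable_inner {f g : Ω → H} (hf : MemLp f 2 P) (hg : MemLp g 2 P) :
    Integrable (fun ω => ⟪f ω, g ω⟫_𝕜) P :=
  (hf.norm.integrable_mul hg.norm).mono' (hf.1.inner hg.1)
    (Filter.Eventually.of_forall fun _ => norm_inner_le_norm _ _)

variable [IsProbabilityMeasure P]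

lemma integral_inner_comp_eq_zero_of_indepFun (hξ : MemLp ξ 2 ν)
    (hξ0 : HasWeakIntegral 𝕜 ν ξ 0) {X Y : Ω → G} (hX : Measurable X) (hY : Measurable Y)
    (hXY : IndepFun X Y P) (hXν : P.map X = ν) (hYν : P.map Y = ν) :
    ∫ ω, ⟪ξ (X ω), ξ (Y ω)⟫_𝕜 ∂P = 0 := by
  have : IsProbabilityMeasure ν := hXν ▸ Measure.isProbabilityMeasure_map hX.aemeasurable
  have hlaw : P.map (fun ω => (X ω, Y ω)) = ν.prod ν := by
    rw [(indepFun_iff_map_prod_eq_prod_map_map hX.aemeasurable hY.aemeasurable).1 hXY, hXν, hYν]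
  have hmeas : AEStronglyMeasurable (fun p : G × G => ⟪ξ p.1, ξ p.2⟫_𝕜) (ν.prod ν) :=
    hξ.1.comp_fst.inner hξ.1.comp_snd
  have hξ1 : Integrable ξ ν := hξ.integrable one_le_two
  have hint : Integrable (fun p : G × G => ⟪ξ p.1, ξ p.2⟫_𝕜) (ν.prod ν) :=
    (hξ1.norm.mul_prod hξ1.norm).mono' hmeas
      (Filter.Eventually.of_forall fun _ => norm_inner_le_norm _ _)
  rw [← integral_map (f := fun p : G × G => ⟪ξ p.1, ξ p.2⟫_𝕜) (hX.prodMk hY).aemeasurable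
    (hlaw ▸ hmeas), hlaw, integral_prod _ hint]
  simp [hξ0 _]

theorem integral_norm_sum_sq_of_indepFun {ι : Type*} [Fintype ι] (hξ : MemLp ξ 2 ν)
    (hξ0 : HasWeakIntegral 𝕜 ν ξ 0) {X : ι → Ω → G} (hX : ∀ k, Measurable (X k))
    (hindep : Pairwise fun j k => IndepFun (X j) (X k) P) (hlaw : ∀ k, P.map (X k) = ν) :
    ∫ ω, ‖∑ k, ξ (X k ω)‖ ^ 2 ∂P = Fintype.card ι * ∫ y, ‖ξ y‖ ^ 2 ∂ν := by
  have hL2 (k : ι) : MemLp (fun ω => ξ (X k ω)) 2 P :=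
    ((hlaw k).symm ▸ hξ).comp_of_map (hX k).aemeasurable
  have hint (j k : ι) : Integrable (fun ω => RCLike.re ⟪ξ (X j ω), ξ (X k ω)⟫_𝕜) P :=
    ((hL2 j).integrable_inner (hL2 k)).re
  have hdiag (k : ι) : ∫ ω, RCLike.re ⟪ξ (X k ω), ξ (X k ω)⟫_𝕜 ∂P = ∫ y, ‖ξ y‖ ^ 2 ∂ν := by
    simp_rw [inner_self_eq_norm_sq]
    rw [← hlaw k, integral_map (hX k).aemeasurable ((hlaw k).symm ▸ hξ.1.norm.pow 2)]
  calc ∫ ω, ‖∑ k, ξ (X k ω)‖ ^ 2 ∂P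
      = ∑ j, ∑ k, ∫ ω, RCLike.re ⟪ξ (X j ω), ξ (X k ω)⟫_𝕜 ∂P := by
        simp_rw [← inner_self_eq_norm_sq (𝕜 := 𝕜), sum_inner, inner_sum, map_sum]
        rw [integral_finsetSum _ fun j _ => integrable_finsetSum _ fun k _ => hint j k]
        exact Finset.sum_congr rfl fun j _ => integral_finsetSum _ fun k _ => hint j k
    _ = ∑ j, ∫ ω, RCLike.re ⟪ξ (X j ω), ξ (X j ω)⟫_𝕜 ∂P := by
        refine Finset.sum_congr rfl fun j _ => Finset.sum_eq_single j (fun k _ hkj => ?_) (by simp)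
        rw [integral_re ((hL2 j).integrable_inner (hL2 k)),
          integral_inner_comp_eq_zero_of_indepFun hξ hξ0 (hX j) (hX k) (hindep hkj.symm)
            (hlaw j) (hlaw k), map_zero]
    _ = Fintype.card ι * ∫ y, ‖ξ y‖ ^ 2 ∂ν := by
        simp only [hdiag, Finset.sum_const, Finset.card_univ, nsmul_eq_mul]

end Independence

section Density

variable {G : Type*} [MeasurableSpace G] {μ : Measure G} {ψ : G → ℝ} {I : ℝ}

lemma integral_inv_smul_withDensity_ofReal {E : Type*} [NormedAddCommGroup E] [NormedSpace ℝ E]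
    (hψm : AEMeasurable ψ μ) (hψ0 : 0 ≤ᵐ[μ] ψ) (hI : 0 ≤ I) (h : G → E) :
    ∫ x, h x ∂((ENNReal.ofReal I)⁻¹ • μ.withDensity fun x => ENNReal.ofReal (ψ x)) =
      I⁻¹ • ∫ x, ψ x • h x ∂μ := by
  rw [integral_smul_measure, integral_withDensity_eq_integral_toReal_smul₀ hψm.ennreal_ofReal
    (Filter.Eventually.of_forall fun _ => ENNReal.ofReal_lt_top), ENNReal.toReal_inv,
    ENNReal.toReal_ofReal hI]
  congr 1
  refine integral_congr_ae ?_
  filter_upwards [hψ0] with x hx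
  rw [ENNReal.toReal_ofReal hx]

lemma withDensity_ofReal_le_self (hψ1 : ∀ᵐ x ∂μ, ψ x ≤ 1) :
    μ.withDensity (fun x => ENNReal.ofReal (ψ x)) ≤ μ :=
  calc μ.withDensity (fun x => ENNReal.ofReal (ψ x)) ≤ μ.withDensity 1 :=
        withDensity_mono (by filter_upwards [hψ1] with x hx using ENNReal.ofReal_le_one.2 hx)
    _ = μ := withDensity_one

lemma MeasureTheory.MemLp.inv_smul_withDensity_ofReal {E : Type*} [NormedAddCommGroup E]
    {p : ℝ≥0∞} {φ : G → E} (hφ : MemLp φ p μ) (hψ1 : ∀ᵐ x ∂μ, ψ x ≤ 1) (hI : 0 < I) :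
    MemLp φ p ((ENNReal.ofReal I)⁻¹ • μ.withDensity fun x => ENNReal.ofReal (ψ x)) :=
  hφ.of_measure_le_smul (by simp [hI]) (smul_le_smul_left _ (withDensity_ofReal_le_self hψ1))

lemma integral_inv_smul_withDensity_ofReal_le (hψm : AEMeasurable ψ μ) (hψ0 : 0 ≤ᵐ[μ] ψ)
    (hψ1 : ∀ᵐ x ∂μ, ψ x ≤ 1) (hI : 0 ≤ I) {u : G → ℝ} (hu0 : 0 ≤ᵐ[μ] u) (hu : Integrable u μ) :
    ∫ x, u x ∂((ENNReal.ofReal I)⁻¹ • μ.withDensity fun x => ENNReal.ofReal (ψ x)) ≤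
      I⁻¹ * ∫ x, u x ∂μ := by
  rw [integral_inv_smul_withDensity_ofReal hψm hψ0 hI, smul_eq_mul]
  refine mul_le_mul_of_nonneg_left (integral_mono_of_nonneg ?_ hu ?_) (inv_nonneg.2 hI)
  · filter_upwards [hψ0, hu0] with x hψx hux using mul_nonneg hψx hux
  · filter_upwards [hψ1, hu0] with x hψx hux using mul_le_of_le_one_left hux hψx

-- For `I ≤ 0` the normalising factor is `(ofReal I)⁻¹ = ∞`, so the total mass is `0` or `∞`.
lemma pos_of_isProbabilityMeasure_inv_smul_withDensity
    (h : IsProbabilityMeasure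
      ((ENNReal.ofReal I)⁻¹ • μ.withDensity fun x => ENNReal.ofReal (ψ x))) :
    0 < I := by
  by_contra! hI
  have huniv := h.measure_univ
  rw [Measure.smul_apply, ENNReal.ofReal_of_nonpos hI, ENNReal.inv_zero, smul_eq_mul] at huniv
  rcases eq_or_ne (μ.withDensity (fun x => ENNReal.ofReal (ψ x)) Set.univ) 0 with h0 | h0
  · rw [h0, mul_zero] at huniv
    exact zero_ne_one huniv
  · rw [ENNReal.top_mul h0] at huniv
    exact ENNReal.top_ne_one huniv

end Density

section Synthesis

variable {G H : Type*} [MeasurableSpace G] [NormedAddCommGroup H] [InnerProductSpace ℂ H]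
  {μ : Measure G} {ψ : G → ℝ} {I : ℝ} {f : G → H} {F : G → ℂ}

lemma hasWeakIntegral_smul_inv_smul_withDensity (hψm : AEMeasurable ψ μ) (hψ0 : 0 ≤ᵐ[μ] ψ)
    (hI : 0 ≤ I) {V : H}
    (hV : ∀ q : H, ⟪V, q⟫_ℂ = ∫ g, (starRingEnd ℂ) ((ψ g : ℂ) * F g) * ⟪f g, q⟫_ℂ ∂μ) :
    HasWeakIntegral ℂ ((ENNReal.ofReal I)⁻¹ • μ.withDensity fun x => ENNReal.ofReal (ψ x))
      (fun g => F g • f g) (I⁻¹ • V) := by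
  intro q
  rw [integral_inv_smul_withDensity_ofReal hψm hψ0 hI, inner_smul_right_eq_smul, ← inner_conj_symm,
    hV q, ← integral_conj]
  congr 1
  refine integral_congr_ae (Filter.Eventually.of_forall fun g => ?_)
  simp only [inner_smul_right, map_mul, Complex.conj_ofReal, RingHomCompTriple.comp_apply,
    RingHom.id_apply, inner_conj_symm, Complex.real_smul]
  ring

lemma MeasureTheory.MemLp.smul_of_norm_le {p : ℝ≥0∞} {C : ℝ} (hF : MemLp F p μ)
    (hfmeas : AEStronglyMeasurable f μ) (hfC : ∀ g, ‖f g‖ ≤ C) :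
    MemLp (fun g => F g • f g) p μ :=
  hF.of_le_mul (c := C) (hF.1.smul hfmeas)
    (ae_of_all _ fun g => by rw [norm_smul, mul_comm]; gcongr; exact hfC g)

lemma integral_norm_smul_sq_le {C : ℝ} (hfC : ∀ g, ‖f g‖ ≤ C) (hF : MemLp F 2 μ) :
    ∫ g, ‖F g • f g‖ ^ 2 ∂μ ≤ C ^ 2 * ∫ g, ‖F g‖ ^ 2 ∂μ := by
  rw [← integral_const_mul]
  refine integral_mono_of_nonneg (Filter.Eventually.of_forall fun _ => by positivity)
    ((hF.integrable_norm_pow two_ne_zero).const_mul _) (Filter.Eventually.of_forall fun g => ?_)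
  dsimp only
  rw [norm_smul, mul_pow, mul_comm]
  gcongr
  exact hfC g

end Synthesis

theorem monteCarlo_synthesis_expected_sq_error_general
    {H : Type*} [NormedAddCommGroup H] [InnerProductSpace ℂ H]
    {G : Type*} [MeasurableSpace G] (μ : Measure G)
    (f : G → H) (A B C : ℝ) (hA : 0 < A) (hAB : A ≤ B)
    (hfmeas : AEStronglyMeasurable f μ) (hfC : ∀ g, ‖f g‖ ≤ C)
    (ψ : G → ℝ) (hψ0 : ∀ g, 0 ≤ ψ g) (hψ1 : ∀ g, ψ g ≤ 1) (hψint : Integrable ψ μ)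
    (F : G → ℂ) (hF : MemLp F 2 μ)
    (VstarψF : H)
    (hVstar : ∀ q : H, (⟪VstarψF, q⟫_ℂ : ℂ) =
      ∫ g, (starRingEnd ℂ) ((ψ g : ℂ) * F g) * ⟪f g, q⟫_ℂ ∂μ)
    {Ω : Type*} [MeasurableSpace Ω] (P : Measure Ω) [IsProbabilityMeasure P]
    (K : ℕ) (hK : 0 < K) (gs : Fin K → Ω → G)
    (hgsmeas : ∀ k, Measurable (gs k))
    (hgsindep : ProbabilityTheory.iIndepFun gs P)
    (hlaw : ∀ k, Measure.map (gs k) P =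
      (ENNReal.ofReal (∫ g, ψ g ∂μ))⁻¹ • μ.withDensity (fun g => ENNReal.ofReal (ψ g))) :
    ∫ ω, ‖(((∫ g, ψ g ∂μ) / K : ℝ) • ∑ k, F (gs k ω) • f (gs k ω)) - VstarψF‖ ^ 2 ∂P ≤
      ((∫ g, ψ g ∂μ) / K) * A⁻¹ * B * C ^ 2 * ∫ g, ‖F g‖ ^ 2 ∂μ := by
  set I := ∫ g, ψ g ∂μ
  set ν := (ENNReal.ofReal I)⁻¹ • μ.withDensity fun g => ENNReal.ofReal (ψ g)
  have hν : IsProbabilityMeasure ν :=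
    hlaw ⟨0, hK⟩ ▸ Measure.isProbabilityMeasure_map (hgsmeas _).aemeasurable
  have hI : 0 < I := pos_of_isProbabilityMeasure_inv_smul_withDensity hν
  set φ : G → H := fun g => F g • f g
  set m : H := I⁻¹ • VstarψF
  have hφμ : MemLp φ 2 μ := hF.smul_of_norm_le hfmeas hfC
  have hφν : MemLp φ 2 ν := hφμ.inv_smul_withDensity_ofReal (ae_of_all _ hψ1) hI
  have hmean : HasWeakIntegral ℂ ν φ m :=
    hasWeakIntegral_smul_inv_smul_withDensity hψint.1.aemeasurable (ae_of_all _ hψ0) hI.le hVstar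
  have hsecond : ∫ g, ‖φ g‖ ^ 2 ∂ν ≤ I⁻¹ * (C ^ 2 * ∫ g, ‖F g‖ ^ 2 ∂μ) :=
    (integral_inv_smul_withDensity_ofReal_le hψint.1.aemeasurable (ae_of_all _ hψ0)
      (ae_of_all _ hψ1) hI.le (ae_of_all _ fun _ => by positivity)
      (hφμ.integrable_norm_pow two_ne_zero)).trans
      (by gcongr; exact integral_norm_smul_sq_le hfC hF)
  have herr (ω : Ω) : (I / K) • ∑ k, φ (gs k ω) - VstarψF = (I / K) • ∑ k, (φ (gs k ω) - m) := by
    rw [Finset.sum_sub_distrib, smul_sub, Finset.sum_const, Finset.card_univ, Fintype.card_fin,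
      ← Nat.cast_smul_eq_nsmul ℝ, smul_smul, smul_smul, div_mul_cancel₀ _ (by positivity),
      mul_inv_cancel₀ hI.ne', one_smul]
  calc ∫ ω, ‖(I / K) • ∑ k, φ (gs k ω) - VstarψF‖ ^ 2 ∂P
      = (I / K) ^ 2 * ∫ ω, ‖∑ k, (φ (gs k ω) - m)‖ ^ 2 ∂P := by
        simp_rw [herr, norm_smul, mul_pow, Real.norm_of_nonneg (by positivity : 0 ≤ I / K)]
        exact integral_const_mul _ _
    _ = (I / K) ^ 2 * (K * (∫ g, ‖φ g‖ ^ 2 ∂ν - ‖m‖ ^ 2)) := by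
        rw [integral_norm_sum_sq_of_indepFun (ξ := fun g => φ g - m) (hφν.sub (memLp_const m))
          (hmean.sub_const (hφν.integrable one_le_two)) hgsmeas
          (fun j k hjk => hgsindep.indepFun hjk) hlaw, hmean.integral_norm_sub_sq hφν,
          Fintype.card_fin]
    _ ≤ (I / K) ^ 2 * (K * (I⁻¹ * (C ^ 2 * ∫ g, ‖F g‖ ^ 2 ∂μ))) := by
        gcongr
        linarith [sq_nonneg ‖m‖]
    _ = I / K * C ^ 2 * ∫ g, ‖F g‖ ^ 2 ∂μ := by
        field_simp
    _ ≤ I / K * A⁻¹ * B * C ^ 2 * ∫ g, ‖F g‖ ^ 2 ∂μ :=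
        (le_mul_of_one_le_left (by positivity) ((one_le_inv_mul₀ hA).2 hAB)).trans_eq (by ring)

/-- **Monte Carlo synthesis approximation rate.** For a bounded continuous
frame `f` with bounds `A, B` and `‖f_g‖ ≤ C`, an envelope `ψ` with `0 ≤ ψ ≤ 1` and
`‖ψ‖₁ < ∞`, `F ∈ L²(G)`, and i.i.d. samples `g¹,…,g^K` drawn from the density `ψ/‖ψ‖₁`, the
Monte Carlo synthesis `V_f^{*K} F = (‖ψ‖₁/K) ∑ₖ F(gᵏ) f_{gᵏ}` satisfies
`𝔼 ‖V_f^{*K}F − V_f^*(ψF)‖² ≤ (‖ψ‖₁/K) A⁻¹ B C² ‖F‖₂²`. -/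
theorem monteCarlo_synthesis_expected_sq_error
    {H : Type*} [NormedAddCommGroup H] [InnerProductSpace ℂ H] [CompleteSpace H]
    {G : Type*} [MeasurableSpace G] (μ : Measure G) [SigmaFinite μ]
    (f : G → H) (A B C : ℝ) (hA : 0 < A) (hAB : A ≤ B) (hC : 0 ≤ C)
    (hfmeas : AEStronglyMeasurable f μ) (hfC : ∀ g, ‖f g‖ ≤ C)
    (hVmeas : ∀ s : H, AEStronglyMeasurable (fun g => (⟪f g, s⟫_ℂ : ℂ)) μ)
    (hlow : ∀ s : H, A * ‖s‖ ^ 2 ≤ ∫ g, ‖(⟪f g, s⟫_ℂ : ℂ)‖ ^ 2 ∂μ)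
    (hup : ∀ s : H, ∫ g, ‖(⟪f g, s⟫_ℂ : ℂ)‖ ^ 2 ∂μ ≤ B * ‖s‖ ^ 2)
    (ψ : G → ℝ) (hψ0 : ∀ g, 0 ≤ ψ g) (hψ1 : ∀ g, ψ g ≤ 1) (hψint : Integrable ψ μ)
    (F : G → ℂ) (hF : MemLp F 2 μ)
    (VstarψF : H)
    (hVstar : ∀ q : H, (⟪VstarψF, q⟫_ℂ : ℂ) =
      ∫ g, (starRingEnd ℂ) ((ψ g : ℂ) * F g) * ⟪f g, q⟫_ℂ ∂μ)
    {Ω : Type*} [MeasurableSpace Ω] (P : Measure Ω) [IsProbabilityMeasure P]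
    (K : ℕ) (hK : 0 < K) (gs : Fin K → Ω → G)
    (hgsmeas : ∀ k, Measurable (gs k))
    (hgsindep : ProbabilityTheory.iIndepFun gs P)
    (hlaw : ∀ k, Measure.map (gs k) P =
      (ENNReal.ofReal (∫ g, ψ g ∂μ))⁻¹ • μ.withDensity (fun g => ENNReal.ofReal (ψ g))) :
    ∫ ω, ‖(((∫ g, ψ g ∂μ) / K : ℝ) • ∑ k, F (gs k ω) • f (gs k ω)) - VstarψF‖ ^ 2 ∂P ≤
      ((∫ g, ψ g ∂μ) / K) * A⁻¹ * B * C ^ 2 * ∫ g, ‖F g‖ ^ 2 ∂μ :=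
  monteCarlo_synthesis_expected_sq_error_general μ f A B C hA hAB hfmeas hfC ψ hψ0 hψ1 hψint F hF
    VstarψF hVstar P K hK gs hgsmeas hgsindep hlaw
end

section
/- Let f : G → H be a continuous frame of a separable Hilbert space H over a σ-finite measure space G. Then for every F ∈ L²(G), the function g ↦ F(g) f_g is weakly integrable, and the adjoint of the analysis operator satisfies V_f*[F] = weak-∫_G F(g) f_g dg, i.e., ⟨q, V_f*F⟩ = ∫_G conj(F(g)) ⟨q, f_g⟩ dg for all q ∈ H. -/
open MeasureTheory ContinuousLinearMap
open scoped InnerProductSpace ComplexConjugate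

namespace MeasureTheory.L2

variable {α 𝕜 : Type*} [MeasurableSpace α] {μ : Measure α} [RCLike 𝕜]

theorem inner_apply_ae_eq_conj_mul {F u : Lp 𝕜 2 μ} {φ : α → 𝕜} (hu : u =ᵐ[μ] φ) :
    (fun a => ⟪(F : α → 𝕜) a, (u : α → 𝕜) a⟫_𝕜) =ᵐ[μ] fun a => conj ((F : α → 𝕜) a) * φ a := by
  filter_upwards [hu] with a ha
  rw [ha, RCLike.inner_apply, mul_comm]

theorem integrable_conj_mul_of_ae_eq (F : Lp 𝕜 2 μ) {u : Lp 𝕜 2 μ} {φ : α → 𝕜}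
    (hu : u =ᵐ[μ] φ) : Integrable (fun a => conj ((F : α → 𝕜) a) * φ a) μ :=
  (integrable_inner F u).congr (inner_apply_ae_eq_conj_mul hu)

theorem inner_eq_integral_conj_mul_of_ae_eq (F : Lp 𝕜 2 μ) {u : Lp 𝕜 2 μ} {φ : α → 𝕜}
    (hu : u =ᵐ[μ] φ) : ⟪F, u⟫_𝕜 = ∫ a, conj ((F : α → 𝕜) a) * φ a ∂μ := by
  rw [inner_def]
  exact integral_congr_ae (inner_apply_ae_eq_conj_mul hu)

end MeasureTheory.L2

theorem synthesis_eq_weak_integral_general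
    {H : Type*} [NormedAddCommGroup H] [InnerProductSpace ℂ H] [CompleteSpace H]
    {G : Type*} [MeasurableSpace G] (μ : Measure G)
    (f : G → H)
    (V : H →L[ℂ] Lp ℂ 2 μ)
    (hV : ∀ s : H, (V s : G → ℂ) =ᵐ[μ] fun g => ⟪f g, s⟫_ℂ) :
    ∀ F : Lp ℂ 2 μ,
      (∀ q : H, Integrable (fun g => (starRingEnd ℂ) ((F : G → ℂ) g) * ⟪f g, q⟫_ℂ) μ) ∧
      (∀ q : H, (⟪adjoint V F, q⟫_ℂ : ℂ) =
        ∫ g, (starRingEnd ℂ) ((F : G → ℂ) g) * ⟪f g, q⟫_ℂ ∂μ) := fun F =>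
  ⟨fun q => L2.integrable_conj_mul_of_ae_eq F (hV q), fun q => by
    rw [adjoint_inner_left]
    exact L2.inner_eq_integral_conj_mul_of_ae_eq F (hV q)⟩

/-- **synthesis operator as weak integral.** For a continuous frame `f : G → H`
with analysis operator `V`, for every `F ∈ L²(G)` the map `g ↦ F(g) f_g` is weakly
integrable and the adjoint (synthesis) operator satisfies
`⟨q, V*F⟩ = ∫ conj(F(g)) ⟨q, f_g⟩ dg` for all `q ∈ H`.  (In Mathlib's convention, where the
inner product is conjugate-linear in the first argument, this reads
`⟪V*F, q⟫ = ∫ conj(F(g)) ⟪f_g, q⟫ dg`.) -/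
theorem synthesis_eq_weak_integral
    {H : Type*} [NormedAddCommGroup H] [InnerProductSpace ℂ H] [CompleteSpace H]
    {G : Type*} [MeasurableSpace G] (μ : Measure G) [SigmaFinite μ]
    (f : G → H) (A B : ℝ) (hA : 0 < A) (hAB : A ≤ B)
    (V : H →L[ℂ] Lp ℂ 2 μ)
    (hV : ∀ s : H, (V s : G → ℂ) =ᵐ[μ] fun g => ⟪f g, s⟫_ℂ)
    (hlow : ∀ s : H, A * ‖s‖ ^ 2 ≤ ‖V s‖ ^ 2)
    (hup : ∀ s : H, ‖V s‖ ^ 2 ≤ B * ‖s‖ ^ 2) :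
    ∀ F : Lp ℂ 2 μ,
      (∀ q : H, Integrable (fun g => (starRingEnd ℂ) ((F : G → ℂ) g) * ⟪f g, q⟫_ℂ) μ) ∧
      (∀ q : H, (⟪adjoint V F, q⟫_ℂ : ℂ) =
        ∫ g, (starRingEnd ℂ) ((F : G → ℂ) g) * ⟪f g, q⟫_ℂ ∂μ) :=
  synthesis_eq_weak_integral_general μ f V hV
end
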